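/- arXiv:2409.07262 — 5 statements merged into one kernel-verified Lean document; each statement's English description precedes it below -/
import Mathlib

section
/- Let α > 1, d ≥ 1 an integer, and k = ⌊√(1/(α−1))⌋. Then d·α^((k+1)/d) ≥ α^k + d − 1. -/
/-!
Write `u = log α`, so that `u ≤ α - 1` and the choice of `k` gives `k² u ≤ 1`. The tangent line
of `exp` at `0` bounds the left side below by `d + (k + 1) u`. On the other side `k u ≤ 1`, so
`α ^ k = exp (k u) ≤ 1 + k u + (k u)²`, and `(k u)² = (k² u) u ≤ u`.
-/

open Real

lemma Nat.floor_sqrt_sq_le {y : ℝ} (hy : 0 ≤ y) : (⌊√y⌋₊ : ℝ) ^ 2 ≤ y :=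
  (Real.le_sqrt (Nat.cast_nonneg _) hy).1 (Nat.floor_le (Real.sqrt_nonneg y))

lemma Real.add_mul_log_le_mul_rpow {α d : ℝ} (hα : 0 < α) (hd : 0 < d) (x : ℝ) :
    d + x * log α ≤ d * α ^ (x / d) := by
  have htangent := add_one_le_exp (log α * (x / d))
  rw [← rpow_def_of_pos hα] at htangent
  calc d + x * log α = d * (log α * (x / d) + 1) := by field_simp; ring
    _ ≤ d * α ^ (x / d) := by gcongr

lemma Real.exp_le_one_add_add_sq {x : ℝ} (hx : |x| ≤ 1) : exp x ≤ 1 + x + x ^ 2 := by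
  linarith [(abs_le.1 (abs_exp_sub_one_sub_id_le hx)).2]

lemma Real.pow_le_one_add_succ_mul_log {α : ℝ} (hα : 1 ≤ α) {k : ℕ}
    (hk : (k : ℝ) ^ 2 * log α ≤ 1) : α ^ k ≤ 1 + (k + 1) * log α := by
  have hu : 0 ≤ log α := log_nonneg hα
  have hkk : (k : ℝ) ≤ (k : ℝ) ^ 2 := by
    exact_mod_cast Nat.le_self_pow two_ne_zero k
  have hku : |(k : ℝ) * log α| ≤ 1 := by
    rw [abs_of_nonneg (by positivity)]
    nlinarith
  have hsq : ((k : ℝ) * log α) ^ 2 ≤ log α := by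
    rw [mul_pow, pow_two (log α), ← mul_assoc]
    exact mul_le_of_le_one_left hu hk
  calc α ^ k = exp (k * log α) := by
        rw [← rpow_natCast, rpow_def_of_pos (by linarith), mul_comm]
    _ ≤ 1 + k * log α + (k * log α) ^ 2 := exp_le_one_add_add_sq hku
    _ ≤ 1 + (k + 1) * log α := by linarith

theorem stmt_1 (α : ℝ) (hα : 1 < α) (d : ℕ) (hd : 1 ≤ d)
    (k : ℕ) (hk : k = ⌊Real.sqrt (1 / (α - 1))⌋₊) :
    (d : ℝ) * α ^ (((k : ℝ) + 1) / (d : ℝ)) ≥ α ^ k + (d : ℝ) - 1 := by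
  have hα1 : 0 < α - 1 := sub_pos.2 hα
  have hk_sq : (k : ℝ) ^ 2 * (α - 1) ≤ 1 := by
    have := Nat.floor_sqrt_sq_le (one_div_pos.2 hα1).le
    rwa [← hk, le_div_iff₀ hα1] at this
  have hk_log : (k : ℝ) ^ 2 * log α ≤ 1 :=
    (mul_le_mul_of_nonneg_left (log_le_sub_one_of_pos (by linarith)) (by positivity)).trans hk_sq
  have hupper := pow_le_one_add_succ_mul_log hα.le hk_log
  have hd0 : (0 : ℝ) < d := by exact_mod_cast hd
  have hlower := add_mul_log_le_mul_rpow (α := α) (by linarith) hd0 ((k : ℝ) + 1)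
  linarith
end

section
/- Let α > 1 and d ≥ 2, and let X = {(α^{n₁},…,α^{n_d}) : nᵢ ∈ ℕ, n₁+⋯+n_d = k} where k = ⌊√(1/(α−1))⌋. Then the convex hull of X contains no point of the exponential lattice L_d(α) = {α^n : n ∈ ℕ}^d other than the points of X themselves. -/
/-!
Two convex sets contain `X`, hence its convex hull. The function `x ↦ ∑ i, log xᵢ` is concave
and equals `k log α` on `X`, so every point of the hull with coordinates `α ^ mᵢ` has
`∑ mᵢ ≥ k`. Superadditivity of `n ↦ α ^ n - 1` bounds the linear functional `∑ i, xᵢ` by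
`α ^ k + d - 1` on `X`, whereas Bernoulli's inequality gives `∑ α ^ mᵢ ≥ d + (∑ mᵢ)(α - 1)`;
the choice of `k` (`k² (α - 1) ≤ 1`) makes `α ^ k - 1 < (k + 1)(α - 1)`, which forces
`∑ mᵢ ≤ k`.
-/

open Finset Real

theorem sum_pow_sub_one_le_pow_sum_sub_one {R ι : Type*} [CommRing R] [LinearOrder R]
    [IsStrictOrderedRing R] {a : R} (ha : 1 ≤ a) (s : Finset ι) (f : ι → ℕ) :
    ∑ i ∈ s, (a ^ f i - 1) ≤ a ^ (∑ i ∈ s, f i) - 1 := by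
  classical
  induction s using Finset.induction with
  | empty => simp
  | insert j s hj ih =>
    rw [sum_insert hj, sum_insert hj, pow_add]
    have hj1 : 0 ≤ a ^ f j - 1 := sub_nonneg.2 (one_le_pow₀ ha)
    have hs1 : 0 ≤ a ^ (∑ i ∈ s, f i) - 1 := sub_nonneg.2 (one_le_pow₀ ha)
    nlinarith [mul_nonneg hj1 hs1]

theorem one_add_pow_lt_of_sq_mul_le {t : ℝ} (ht : 0 < t) {k : ℕ} (hk : (k : ℝ) ^ 2 * t ≤ 1) :
    (1 + t) ^ k < 1 + (k + 1) * t := by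
  rcases Nat.eq_zero_or_pos k with rfl | hk0
  · simp [ht]
  have hk1 : (1 : ℝ) ≤ k := by exact_mod_cast hk0
  have hkt : |(k : ℝ) * t| ≤ 1 := by
    rw [abs_of_nonneg (by positivity)]
    nlinarith
  calc (1 + t) ^ k < exp t ^ k := by
        gcongr
        linarith [add_one_lt_exp ht.ne']
    _ = exp (k * t) := (exp_nat_mul t k).symm
    _ ≤ 1 + k * t + (k * t) ^ 2 := by
        have := abs_le.1 (abs_exp_sub_one_sub_id_le hkt)
        linarith [this.2]
    _ ≤ 1 + (k + 1) * t := by nlinarith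

theorem sq_natFloor_sqrt_inv_mul_le (t : ℝ) : (⌊√(1 / t)⌋₊ : ℝ) ^ 2 * t ≤ 1 := by
  rcases le_or_gt t 0 with ht | ht
  · nlinarith [sq_nonneg (⌊√(1 / t)⌋₊ : ℝ)]
  have hfloor : (⌊√(1 / t)⌋₊ : ℝ) ^ 2 ≤ 1 / t := by
    calc (⌊√(1 / t)⌋₊ : ℝ) ^ 2 ≤ √(1 / t) ^ 2 := by
          gcongr; exact Nat.floor_le (sqrt_nonneg _)
      _ = 1 / t := sq_sqrt (by positivity)
  rwa [le_div_iff₀ ht] at hfloor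

theorem ConcaveOn.sum_comp_eval {ι : Type*} [Fintype ι] {s : Set ℝ} {f : ℝ → ℝ}
    (hf : ConcaveOn ℝ s f) :
    ConcaveOn ℝ (Set.univ.pi fun _ : ι => s) (fun x => ∑ i, f (x i)) := by
  refine ⟨convex_pi fun _ _ => hf.1, fun x hx y hy a b ha hb hab => ?_⟩
  simp only [smul_eq_mul, mul_sum, ← sum_add_distrib, Pi.add_apply, Pi.smul_apply]
  exact sum_le_sum fun i _ => hf.2 (hx i trivial) (hy i trivial) ha hb hab

theorem sum_le_of_sum_pow_le {ι : Type*} [Fintype ι] {α : ℝ} (hα : 1 < α) {k : ℕ}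
    (hk : (k : ℝ) ^ 2 * (α - 1) ≤ 1) (m : ι → ℕ)
    (hm : ∑ i, α ^ m i ≤ α ^ k + Fintype.card ι - 1) :
    ∑ i, m i ≤ k := by
  by_contra! hlt
  have hk_succ : (k : ℝ) + 1 ≤ ∑ i, (m i : ℝ) := by exact_mod_cast hlt
  have hbern : Fintype.card ι + (∑ i, (m i : ℝ)) * (α - 1) ≤ ∑ i, α ^ m i := by
    calc Fintype.card ι + (∑ i, (m i : ℝ)) * (α - 1) = ∑ i, (1 + m i * (α - 1)) := by
          simp [sum_add_distrib, sum_mul]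
      _ ≤ ∑ i, α ^ m i := sum_le_sum fun i _ => one_add_mul_sub_le_pow (by linarith) _
  have hkey := one_add_pow_lt_of_sq_mul_le (sub_pos.2 hα) hk
  rw [add_sub_cancel] at hkey
  nlinarith

theorem stmt_5_general (α : ℝ) (hα : 1 < α) (d : ℕ)
    (k : ℕ) (hk : k = ⌊Real.sqrt (1 / (α - 1))⌋₊)
    (X : Set (Fin d → ℝ))
    (hX : X = {x | ∃ n : Fin d → ℕ, (∑ i, n i) = k ∧ ∀ i, x i = α ^ (n i)})
    (L : Set (Fin d → ℝ))
    (hL : L = {x | ∀ i, ∃ n : ℕ, x i = α ^ n}) :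
    convexHull ℝ X ∩ L ⊆ X := by
  have hsum_log (n : Fin d → ℕ) : ∑ i, log (α ^ n i) = (∑ i, n i : ℕ) * log α := by
    simp [Real.log_pow, sum_mul]
  set A := {x ∈ Set.univ.pi fun _ => Set.Ioi 0 | k * log α ≤ ∑ i : Fin d, log (x i)}
  set B := {x : Fin d → ℝ | ∑ i, x i ≤ α ^ k + d - 1}
  have hA : Convex ℝ A := strictConcaveOn_log_Ioi.concaveOn.sum_comp_eval.convex_ge _
  have hB : Convex ℝ B :=
    convex_halfSpace_le ⟨fun x y => sum_add_distrib, fun c x => by simp [mul_sum]⟩ _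
  have hXAB : X ⊆ A ∩ B := by
    rintro x hx
    obtain ⟨n, hnk, hx⟩ := hX ▸ hx
    obtain rfl : x = fun i => α ^ n i := funext hx
    refine ⟨⟨fun i _ => pow_pos (zero_lt_one.trans hα) _, by rw [hsum_log, hnk]⟩, ?_⟩
    have := sum_pow_sub_one_le_pow_sum_sub_one hα.le univ n
    simp only [sum_sub_distrib, sum_const, card_univ, Fintype.card_fin, nsmul_one, hnk] at this
    show ∑ i, α ^ n i ≤ α ^ k + d - 1
    linarith
  rintro p ⟨hp, hpL⟩
  obtain ⟨⟨-, hpA⟩, hpB⟩ := convexHull_min hXAB (hA.inter hB) hp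
  obtain ⟨m, hm⟩ := Classical.axiomOfChoice (hL ▸ hpL)
  obtain rfl : p = fun i => α ^ m i := funext hm
  refine hX ▸ ⟨m, le_antisymm ?_ ?_, fun _ => rfl⟩
  · refine sum_le_of_sum_pow_le hα (hk ▸ sq_natFloor_sqrt_inv_mul_le _) m ?_
    simpa [B] using hpB
  · rw [hsum_log] at hpA
    exact_mod_cast le_of_mul_le_mul_right hpA (log_pos hα)

theorem stmt_5 (α : ℝ) (hα : 1 < α) (d : ℕ) (hd : 2 ≤ d)
    (k : ℕ) (hk : k = ⌊Real.sqrt (1 / (α - 1))⌋₊)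
    (X : Set (Fin d → ℝ))
    (hX : X = {x | ∃ n : Fin d → ℕ, (∑ i, n i) = k ∧ ∀ i, x i = α ^ (n i)})
    (L : Set (Fin d → ℝ))
    (hL : L = {x | ∀ i, ∃ n : ℕ, x i = α ^ n}) :
    convexHull ℝ X ∩ L ⊆ X :=
  stmt_5_general α hα d k hk X hX L hL
end

section
/- Define the Fibonacci numbers by F₀=0, F₁=1, F_{n+2}=F_{n+1}+F_n, and let φ=(1+√5)/2, ψ=(1−√5)/2. For every i ≥ 1, the slope of the segment from p_i = (−F_{2i}, 2F_{2i+1}−1) to p_{i+1} = (−F_{2i+2}, 2F_{2i+3}−1) equals −2(φ + ψ^{2i+1}/F_{2i+1}). -/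
theorem stmt_6 (φ ψ : ℝ) (hφ : φ = (1 + Real.sqrt 5) / 2) (hψ : ψ = (1 - Real.sqrt 5) / 2)
    (i : ℕ) (hi : 1 ≤ i) :
    ((2 * (Nat.fib (2 * i + 3) : ℝ) - 1) - (2 * (Nat.fib (2 * i + 1) : ℝ) - 1)) /
      ((-(Nat.fib (2 * i + 2) : ℝ)) - (-(Nat.fib (2 * i) : ℝ)))
      = -2 * (φ + ψ ^ (2 * i + 1) / (Nat.fib (2 * i + 1) : ℝ)) := by
  subst hφ hψ
  have h5 : Real.sqrt 5 > 0 := by positivity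
  have hpsi : Real.goldenConj = Real.goldenRatio - Real.sqrt 5 := by
    simp only [Real.goldenConj, Real.goldenRatio]; ring
  have hkey : (Nat.fib (2 * i + 2) : ℝ)
      = Real.goldenRatio * Nat.fib (2 * i + 1) + Real.goldenConj ^ (2 * i + 1) := by
    rw [Real.coe_fib_eq, Real.coe_fib_eq]
    field_simp
    linear_combination (Real.goldenConj ^ (2 * i + 1)) * hpsi
  have h3 : (Nat.fib (2 * i + 3) : ℝ) = Nat.fib (2 * i + 2) + Nat.fib (2 * i + 1) := by
    have := Nat.fib_add_two (n := 2 * i + 1)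
    push_cast [this]; ring
  have hfibpos : (0:ℝ) < Nat.fib (2 * i + 1) := by
    exact_mod_cast Nat.fib_pos.mpr (by omega)
  have h2 : (-(Nat.fib (2 * i + 2) : ℝ)) - (-(Nat.fib (2 * i) : ℝ)) = -(Nat.fib (2 * i + 1)) := by
    have := Nat.fib_add_two (n := 2 * i)
    push_cast [this]; ring
  rw [h3, h2, hkey]
  simp only [Real.goldenConj, Real.goldenRatio]
  field_simp
  ring
end

section
/- The sequence of slopes s_i = −2(φ + ψ^{2i+1}/F_{2i+1}) is strictly decreasing in i, where φ=(1+√5)/2, ψ=(1−√5)/2 and F_n are the Fibonacci numbers. -/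
theorem stmt_8 (φ ψ : ℝ) (hφ : φ = (1 + Real.sqrt 5) / 2) (hψ : ψ = (1 - Real.sqrt 5) / 2)
    (s : ℕ → ℝ)
    (hs : ∀ i, s i = -2 * (φ + ψ ^ (2 * i + 1) / (Nat.fib (2 * i + 1) : ℝ))) :
    ∀ i j : ℕ, 1 ≤ i → i < j → s j < s i := by
  have h5 : (1 : ℝ) < Real.sqrt 5 := by
    have := Real.sq_sqrt (by norm_num : (5:ℝ) ≥ 0)
    nlinarith [Real.sqrt_nonneg 5]
  have h5' : Real.sqrt 5 < 3 := by
    have := Real.sq_sqrt (by norm_num : (5:ℝ) ≥ 0)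
    nlinarith [Real.sqrt_nonneg 5]
  set t : ℝ := (Real.sqrt 5 - 1) / 2 with ht
  have ht0 : 0 < t := by rw [ht]; linarith
  have ht1 : t < 1 := by rw [ht]; linarith
  have hψt : ψ = -t := by rw [hψ, ht]; ring
  have step : ∀ k, s (k + 1) < s k := by
    intro k
    rw [hs, hs]
    have hodd1 : Odd (2 * k + 1) := ⟨k, by ring⟩
    have hodd2 : Odd (2 * (k + 1) + 1) := ⟨k + 1, by ring⟩
    have e1 : ψ ^ (2 * k + 1) = -(t ^ (2 * k + 1)) := by rw [hψt, hodd1.neg_pow]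
    have e2 : ψ ^ (2 * (k + 1) + 1) = -(t ^ (2 * (k + 1) + 1)) := by rw [hψt, hodd2.neg_pow]
    have hf1 : (0:ℝ) < (Nat.fib (2 * k + 1) : ℝ) := by
      exact_mod_cast Nat.fib_pos.mpr (by omega)
    have hf2 : (0:ℝ) < (Nat.fib (2 * (k + 1) + 1) : ℝ) := by
      exact_mod_cast Nat.fib_pos.mpr (by omega)
    have hfle : (Nat.fib (2 * k + 1) : ℝ) ≤ (Nat.fib (2 * (k + 1) + 1) : ℝ) := by
      exact_mod_cast Nat.fib_mono (by omega)
    have hpow : t ^ (2 * (k + 1) + 1) < t ^ (2 * k + 1) :=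
      pow_lt_pow_right_of_lt_one₀ ht0 ht1 (by omega)
    have hdiv : t ^ (2 * (k + 1) + 1) / (Nat.fib (2 * (k + 1) + 1) : ℝ)
        < t ^ (2 * k + 1) / (Nat.fib (2 * k + 1) : ℝ) := by
      apply div_lt_div₀ hpow hfle (by positivity) hf1
    rw [e1, e2, neg_div, neg_div]
    linarith
  intro i j _ hij
  exact (strictAnti_nat_of_succ_lt step) hij
end

section
/- Let m be a positive integer with least prime factor p, let 1 ≤ k ≤ m and d ≥ 1 with d < p(m−1)/(m(m−k)), and let A = S + mℤ for some S ⊆ {0,…,m−1} with |S| = k. If u, v ∈ A^d ⊆ ℤ^d satisfy v − u ∈ mℤ^d and u ≠ v, then there exists i ∈ {1,…,m−1} such that u + (i/m)(v−u) ∈ A^d. -/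
theorem stmt_11 (m : ℕ) (hm : 0 < m) (p : ℕ) (hp : p = m.minFac)
    (k d : ℕ) (hk1 : 1 ≤ k) (hkm : k ≤ m) (hd : 1 ≤ d)
    (hdbound : (d : ℚ) < ((p : ℚ) * ((m : ℚ) - 1)) / ((m : ℚ) * ((m : ℚ) - (k : ℚ))))
    (S : Finset ℕ) (hS : S ⊆ Finset.range m) (hScard : S.card = k)
    (A : Set ℤ) (hA : A = {n : ℤ | ∃ s ∈ S, (m : ℤ) ∣ (n - (s : ℤ))})
    (u v : Fin d → ℤ)
    (hu : ∀ j, u j ∈ A) (hv : ∀ j, v j ∈ A)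
    (hdiv : ∀ j, (m : ℤ) ∣ (v j - u j)) (huv : u ≠ v) :
    ∃ i ∈ Finset.Icc 1 (m - 1), ∀ j, u j + (i : ℤ) * ((v j - u j) / (m : ℤ)) ∈ A := by
  classical
  -- positivity of the RHS of hdbound
  have hRHSpos : (0 : ℚ) < ((p : ℚ) * ((m : ℚ) - 1)) / ((m : ℚ) * ((m : ℚ) - (k : ℚ))) := by
    have : (1 : ℚ) ≤ (d : ℚ) := by exact_mod_cast hd
    linarith
  have hden : (0 : ℚ) < (m : ℚ) * ((m : ℚ) - (k : ℚ)) := by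
    by_contra h
    push_neg at h
    have hnum : (0 : ℚ) ≤ (p : ℚ) * ((m : ℚ) - 1) := by
      have h1 : (1 : ℚ) ≤ (m : ℚ) := by exact_mod_cast hm
      have h2 : (0 : ℚ) ≤ (p : ℚ) := Nat.cast_nonneg p
      nlinarith
    rcases lt_or_eq_of_le h with h' | h'
    · have := div_nonpos_of_nonneg_of_nonpos hnum (le_of_lt h')
      linarith
    · rw [h', div_zero] at hRHSpos
      exact lt_irrefl _ hRHSpos
  have hkltm : k < m := by
    rcases lt_or_ge k m with h | h
    · exact h
    · exfalso
      have : (m : ℚ) - (k : ℚ) ≤ 0 := by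
        have : (m : ℚ) ≤ (k : ℚ) := by exact_mod_cast h
        linarith
      have hm0 : (0 : ℚ) < (m : ℚ) := by exact_mod_cast hm
      nlinarith
  have hm2 : 2 ≤ m := by omega
  have hppos : 0 < p := by rw [hp]; exact Nat.minFac_pos m
  have hpdvd : p ∣ m := by rw [hp]; exact Nat.minFac_dvd m
  -- key numeric inequality
  have hkey : d * (m * (m - k)) < p * (m - 1) := by
    have h1 : (d : ℚ) * ((m : ℚ) * ((m : ℚ) - (k : ℚ))) < (p : ℚ) * ((m : ℚ) - 1) :=
      (lt_div_iff₀ hden).mp hdbound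
    have h2 : ((d * (m * (m - k)) : ℕ) : ℚ) < ((p * (m - 1) : ℕ) : ℚ) := by
      push_cast [Nat.cast_sub hkm, Nat.cast_sub hm]
      linear_combination h1
    exact_mod_cast h2
  haveI : NeZero m := ⟨by omega⟩
  -- the residue set
  set T : Finset (ZMod m) := S.image (Nat.cast) with hT
  have hcast_inj : ∀ a ∈ Finset.range m, ∀ b ∈ Finset.range m,
      (a : ZMod m) = (b : ZMod m) → a = b := by
    intro a ha b hb hab
    rw [Finset.mem_range] at ha hb
    have := congrArg ZMod.val hab
    rwa [ZMod.val_cast_of_lt ha, ZMod.val_cast_of_lt hb] at this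
  have hTcard : T.card = k := by
    rw [hT, Finset.card_image_of_injOn, hScard]
    intro a ha b hb hab
    exact hcast_inj a (hS ha) b (hS hb) hab
  have hTccard : Tᶜ.card = m - k := by
    rw [Finset.card_compl, hTcard, ZMod.card]
  have hmemA : ∀ x : ℤ, x ∈ A ↔ ((x : ZMod m) ∈ T) := by
    intro x
    rw [hA]
    simp only [Set.mem_setOf_eq, hT, Finset.mem_image]
    constructor
    · rintro ⟨s, hs, hdv⟩
      refine ⟨s, hs, ?_⟩
      have : ((x - (s : ℤ) : ℤ) : ZMod m) = 0 :=
        (ZMod.intCast_zmod_eq_zero_iff_dvd _ m).mpr hdv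
      push_cast at this
      linear_combination -this
    · rintro ⟨s, hs, hsx⟩
      refine ⟨s, hs, ?_⟩
      rw [← ZMod.intCast_zmod_eq_zero_iff_dvd]
      push_cast
      rw [hsx]
      ring
  -- the quotient vectors
  set w : Fin d → ℤ := fun j => (v j - u j) / (m : ℤ) with hwdef
  have hw : ∀ j, (m : ℤ) * w j = v j - u j := fun j => Int.mul_ediv_cancel' (hdiv j)
  -- the bad sets
  set B : Fin d → Finset (ZMod m) := fun j =>
    Finset.univ.filter (fun i : ZMod m => (u j : ZMod m) + i * ((w j : ℤ) : ZMod m) ∉ T) with hB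
  -- bound on each bad set
  have hBbound : ∀ j, (B j).card ≤ (m / p) * (m - k) := by
    intro j
    by_cases hwj : ((w j : ℤ) : ZMod m) = 0
    · have : B j = ∅ := by
        rw [hB]
        ext i
        simp only [Finset.mem_filter, Finset.mem_univ, true_and, Finset.notMem_empty,
          iff_false, not_not, hwj, mul_zero, add_zero]
        exact (hmemA (u j)).mp (hu j)
      rw [this]
      simp
    · set c : ZMod m := ((w j : ℤ) : ZMod m) with hc
      set f : ZMod m → ZMod m := fun i => (u j : ZMod m) + i * c with hf
      -- the kernel
      set K : Finset (ZMod m) := Finset.univ.filter (fun x : ZMod m => x * c = 0) with hK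
      have hKcard_dvd : K.card ∣ m := by
        let H : AddSubgroup (ZMod m) :=
          { carrier := {x | x * c = 0}
            zero_mem' := by simp
            add_mem' := by
              intro a b ha hb
              simp only [Set.mem_setOf_eq] at *
              rw [add_mul, ha, hb, add_zero]
            neg_mem' := by
              intro a ha
              simp only [Set.mem_setOf_eq] at *
              rw [neg_mul, ha, neg_zero] }
        have h1 : Nat.card H ∣ m := by
          have := AddSubgroup.card_addSubgroup_dvd_card H
          simpa [Nat.card_eq_fintype_card, ZMod.card] using this
        have h2 : K.card = Nat.card H := by
          rw [Nat.card_eq_fintype_card, Fintype.card_subtype]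
          congr 1
          ext x
          simp [hK, H]
        rwa [h2]
      have hKne : K.card ≠ m := by
        intro h
        have : K = Finset.univ := by
          apply Finset.eq_univ_of_card
          rw [h, ZMod.card]
        have h1 : (1 : ZMod m) ∈ K := this ▸ Finset.mem_univ _
        rw [hK, Finset.mem_filter] at h1
        rw [one_mul] at h1
        exact hwj h1.2
      have hKle : K.card ≤ m / p := by
        have hKpos : 0 < K.card := by
          apply Finset.card_pos.mpr
          exact ⟨0, by simp [hK]⟩
        have hKlt : K.card < m := lt_of_le_of_ne (Nat.le_of_dvd hm hKcard_dvd) hKne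
        have hq2 : 2 ≤ m / K.card := by
          rw [Nat.le_div_iff_mul_le hKpos]
          rcases hKcard_dvd with ⟨q, hq⟩
          have hq1 : q ≠ 1 := by rintro rfl; omega
          have hq0 : q ≠ 0 := by rintro rfl; omega
          have h2q : 2 ≤ q := by omega
          calc 2 * K.card ≤ q * K.card := Nat.mul_le_mul_right _ h2q
            _ = m := by rw [mul_comm]; exact hq.symm
        have hple : p ≤ m / K.card := by
          rw [hp]
          exact Nat.minFac_le_of_dvd hq2 (Nat.div_dvd_of_dvd hKcard_dvd)
        calc K.card = m / (m / K.card) := (Nat.div_div_self hKcard_dvd (by omega)).symm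
          _ ≤ m / p := Nat.div_le_div_left hple hppos
      -- fiber bound
      have hfib : ∀ t ∈ (B j).image f, ((B j).filter (fun x => f x = t)).card ≤ K.card := by
        intro t ht
        rw [Finset.mem_image] at ht
        obtain ⟨i₀, _, hi₀⟩ := ht
        apply Finset.card_le_card_of_injOn (fun x => x - i₀)
        · intro x hx
          rw [Finset.mem_coe, Finset.mem_filter] at hx
          rw [Finset.mem_coe, hK, Finset.mem_filter]
          refine ⟨Finset.mem_univ _, ?_⟩
          have h3 : x * c = i₀ * c := by
            have h := hx.2.trans hi₀.symm
            simpa [hf] using h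
          rw [sub_mul, h3, sub_self]
        · intro a _ b _ hab
          simpa using congrArg (· + i₀) hab
      have himg : (B j).image f ⊆ Tᶜ := by
        intro t ht
        rw [Finset.mem_image] at ht
        obtain ⟨i, hi, rfl⟩ := ht
        rw [hB, Finset.mem_filter] at hi
        rw [Finset.mem_compl]
        exact hi.2
      calc (B j).card ≤ K.card * ((B j).image f).card :=
            Finset.card_le_mul_card_image (B j) K.card hfib
        _ ≤ (m / p) * (m - k) := by
            apply Nat.mul_le_mul hKle
            calc ((B j).image f).card ≤ Tᶜ.card := Finset.card_le_card himg
              _ = m - k := hTccard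
  -- main counting argument
  by_contra hcon
  push_neg at hcon
  have hsub : (Finset.Icc 1 (m - 1)).image (fun i : ℕ => (i : ZMod m)) ⊆
      Finset.univ.biUnion B := by
    intro t ht
    rw [Finset.mem_image] at ht
    obtain ⟨i, hi, rfl⟩ := ht
    obtain ⟨j, hj⟩ := hcon i hi
    rw [Finset.mem_biUnion]
    refine ⟨j, Finset.mem_univ _, ?_⟩
    rw [hB, Finset.mem_filter]
    refine ⟨Finset.mem_univ _, ?_⟩
    intro hmem
    apply hj
    rw [hmemA]
    push_cast
    exact hmem
  have hinj : Set.InjOn (fun i : ℕ => (i : ZMod m)) (Finset.Icc 1 (m - 1)) := by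
    intro a ha b hb hab
    rw [Finset.coe_Icc, Set.mem_Icc] at ha hb
    exact hcast_inj a (Finset.mem_range.mpr (by omega)) b (Finset.mem_range.mpr (by omega)) hab
  have hcount : m - 1 ≤ d * ((m / p) * (m - k)) := by
    calc m - 1 = (Finset.Icc 1 (m - 1)).card := by rw [Nat.card_Icc]; omega
      _ = ((Finset.Icc 1 (m - 1)).image (fun i : ℕ => (i : ZMod m))).card :=
          (Finset.card_image_of_injOn hinj).symm
      _ ≤ (Finset.univ.biUnion B).card := Finset.card_le_card hsub
      _ ≤ ∑ j : Fin d, (B j).card := Finset.card_biUnion_le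
      _ ≤ ∑ _j : Fin d, (m / p) * (m - k) := Finset.sum_le_sum (fun j _ => hBbound j)
      _ = d * ((m / p) * (m - k)) := by rw [Finset.sum_const, Finset.card_univ,
          Fintype.card_fin, smul_eq_mul]
  -- contradiction with hkey
  have hfinal : p * (m - 1) ≤ p * (d * ((m / p) * (m - k))) := Nat.mul_le_mul_left p hcount
  have hpm : p * (m / p) = m := Nat.mul_div_cancel' hpdvd
  have heq : p * (d * ((m / p) * (m - k))) = d * ((p * (m / p)) * (m - k)) := by ring
  rw [hpm] at heq
  omega
end
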